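/- arXiv:2201.05349 — 3 statements merged into one kernel-verified Lean document; each statement's English description precedes it below -/
import Mathlib

section
/- The TFGM objective equals the relaxed QAP objective with a specific choice of Q and P: for a linear GNN H^{(l)} = A H^{(l-1)} W_l with H^{(0)} = X, and Z^{(l)}_{ij} = 1/(‖(H^{(l)})^{(s)}_i‖₂ ‖(H^{(l)})^{(t)}_j‖₂) (assuming all these norms are nonzero), we have for every assignment matrix S: ∑_{ij} S_{ij} ∑_{l=0}^{L} Cos((H^{(l)})^{(s)}, (H^{(l)})^{(t)})_{ij} = ∑_{ij} Q_{ij} S_{ij} + ∑_{ij} S_{ij} ∑_{i',j'} A^{(s)}_{ii'} A^{(t)}_{jj'} P^{(ij)}_{i'j'}, where Q = Z^{(0)} ⊙ (X^{(s)} (X^{(t)})^T) and P^{(ij)} = ∑_{l=1}^{L} Z^{(l)}_{ij} (H^{(l-1)})^{(s)} W_l W_l^T ((H^{(l-1)})^{(t)})^T. -/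
open Matrix Finset

/-- Layer outputs of a linear GNN: `H 0 = X`, `H l = A * H (l-1) * W l`. -/
def layerH {n d : ℕ} (A : Matrix (Fin n) (Fin n) ℝ) (W : ℕ → Matrix (Fin d) (Fin d) ℝ)
    (X : Matrix (Fin n) (Fin d) ℝ) : ℕ → Matrix (Fin n) (Fin d) ℝ
  | 0 => X
  | (l + 1) => A * layerH A W X l * W (l + 1)

/-- Euclidean norm of the `i`-th row of a matrix. -/
noncomputable def rowNorm {n d : ℕ} (M : Matrix (Fin n) (Fin d) ℝ) (i : Fin n) : ℝ :=
  Real.sqrt (∑ k, M i k ^ 2)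

/-- Row-wise cosine similarity matrix. -/
noncomputable def cosSim {n m d : ℕ} (U : Matrix (Fin n) (Fin d) ℝ)
    (V : Matrix (Fin m) (Fin d) ℝ) : Matrix (Fin n) (Fin m) ℝ :=
  fun i j => (∑ k, U i k * V j k) / (rowNorm U i * rowNorm V j)

/-! The cosine similarity of layer `l` is `Z l ⊙ (H_s^{(l)} H_t^{(l)ᵀ})`. For `l = 0` this is `Q`;
for `l ≥ 1` the recursion of the linear GNN factors `H_s^{(l)} H_t^{(l)ᵀ}` as
`A_s (H_s^{(l-1)} W_l W_lᵀ H_t^{(l-1)ᵀ}) A_tᵀ`, and expanding this bilinear form entrywise and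
pulling the scalars `Z l i j` inside gives the `P` term. -/

lemma cosSim_apply_eq_inv_mul {n m d : ℕ} (U : Matrix (Fin n) (Fin d) ℝ)
    (V : Matrix (Fin m) (Fin d) ℝ) (i : Fin n) (j : Fin m) :
    cosSim U V i j = (rowNorm U i * rowNorm V j)⁻¹ * (U * Vᵀ) i j := by
  rw [cosSim, div_eq_inv_mul, mul_apply]
  simp only [transpose_apply]

lemma mul_mul_transpose_apply {ι κ ι' κ' R : Type*} [Fintype ι'] [Fintype κ'] [CommSemiring R]
    (A : Matrix ι ι' R) (M : Matrix ι' κ' R) (B : Matrix κ κ' R) (i : ι) (j : κ) :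
    (A * M * Bᵀ) i j = ∑ i', ∑ j', A i i' * B j j' * M i' j' := by
  simp only [mul_apply, transpose_apply, sum_mul]
  rw [sum_comm]
  exact sum_congr rfl fun _ _ => sum_congr rfl fun _ _ => by ring

lemma mul_mul_transpose_mul_mul_transpose {ι κ ι' κ' δ R : Type*} [Fintype ι'] [Fintype κ']
    [Fintype δ] [CommSemiring R] (A : Matrix ι ι' R) (M : Matrix ι' δ R) (B : Matrix κ κ' R)
    (N : Matrix κ' δ R) (W : Matrix δ δ R) :
    A * M * W * (B * N * W)ᵀ = A * (M * W * Wᵀ * Nᵀ) * Bᵀ := by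
  simp only [transpose_mul, Matrix.mul_assoc]

lemma sum_mul_mul_sum_smul_apply {ι κ ι' κ' α R : Type*} [Fintype ι'] [Fintype κ']
    [CommSemiring R] (A : Matrix ι ι' R) (B : Matrix κ κ' R) (s : Finset α) (c : α → R)
    (M : α → Matrix ι' κ' R) (i : ι) (j : κ) :
    ∑ i', ∑ j', A i i' * B j j' * (∑ l ∈ s, c l • M l) i' j' =
      ∑ l ∈ s, c l * (A * M l * Bᵀ) i j := by
  rw [← mul_mul_transpose_apply, Matrix.mul_sum, Matrix.sum_mul, Matrix.sum_apply]
  simp only [Matrix.mul_smul, Matrix.smul_mul, Matrix.smul_apply, smul_eq_mul]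

lemma sum_Icc_one_eq_sum_range {M : Type*} [AddCommMonoid M] (f : ℕ → M) (L : ℕ) :
    ∑ l ∈ Icc 1 L, f l = ∑ l ∈ range L, f (l + 1) := by
  rw [← Ico_add_one_right_eq_Icc, sum_Ico_eq_sum_range, Nat.add_sub_cancel]
  simp only [add_comm 1]

theorem stmt2_general {n m d : ℕ} (L : ℕ)
    (As : Matrix (Fin n) (Fin n) ℝ) (Xs : Matrix (Fin n) (Fin d) ℝ)
    (At : Matrix (Fin m) (Fin m) ℝ) (Xt : Matrix (Fin m) (Fin d) ℝ)
    (W : ℕ → Matrix (Fin d) (Fin d) ℝ)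
    (Hs : ℕ → Matrix (Fin n) (Fin d) ℝ) (Ht : ℕ → Matrix (Fin m) (Fin d) ℝ)
    (hHs : Hs = layerH As W Xs) (hHt : Ht = layerH At W Xt)
    (Z : ℕ → Matrix (Fin n) (Fin m) ℝ)
    (hZ : ∀ l i j, Z l i j = 1 / (rowNorm (Hs l) i * rowNorm (Ht l) j))
    (Q : Matrix (Fin n) (Fin m) ℝ)
    (hQ : Q = fun i j => Z 0 i j * (Xs * Xtᵀ) i j)
    (P : Fin n → Fin m → Matrix (Fin n) (Fin m) ℝ)
    (hP : ∀ i j, P i j = ∑ l ∈ Finset.Icc 1 L, Z l i j • (Hs (l - 1) * W l * (W l)ᵀ * (Ht (l - 1))ᵀ))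
    (S : Matrix (Fin n) (Fin m) ℝ) :
    ∑ i, ∑ j, S i j * ∑ l ∈ Finset.range (L + 1), cosSim (Hs l) (Ht l) i j =
      (∑ i, ∑ j, Q i j * S i j) +
        ∑ i, ∑ j, S i j * ∑ i', ∑ j', As i i' * At j j' * P i j i' j' := by
  have hcos : ∀ l i j, cosSim (Hs l) (Ht l) i j = Z l i j * (Hs l * (Ht l)ᵀ) i j := by
    intro l i j
    rw [cosSim_apply_eq_inv_mul, hZ, one_div]
  have hbase : Hs 0 * (Ht 0)ᵀ = Xs * Xtᵀ := by rw [hHs, hHt]; rfl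
  have hstep : ∀ l, Hs (l + 1) * (Ht (l + 1))ᵀ =
      As * (Hs l * W (l + 1) * (W (l + 1))ᵀ * (Ht l)ᵀ) * Atᵀ := by
    subst hHs hHt
    exact fun l => mul_mul_transpose_mul_mul_transpose _ _ _ _ _
  have hsum : ∀ i j, ∑ l ∈ range (L + 1), cosSim (Hs l) (Ht l) i j =
      Q i j + ∑ i', ∑ j', As i i' * At j j' * P i j i' j' := by
    intro i j
    rw [sum_range_succ', add_comm, hP, sum_mul_mul_sum_smul_apply, sum_Icc_one_eq_sum_range, hQ]
    simp only [hcos, hbase, hstep, Nat.add_sub_cancel]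
  simp only [hsum, mul_comm (S _ _), add_mul, sum_add_distrib]

theorem stmt2 {n m d : ℕ} (L : ℕ)
    (As : Matrix (Fin n) (Fin n) ℝ) (Xs : Matrix (Fin n) (Fin d) ℝ)
    (At : Matrix (Fin m) (Fin m) ℝ) (Xt : Matrix (Fin m) (Fin d) ℝ)
    (W : ℕ → Matrix (Fin d) (Fin d) ℝ)
    (Hs : ℕ → Matrix (Fin n) (Fin d) ℝ) (Ht : ℕ → Matrix (Fin m) (Fin d) ℝ)
    (hHs : Hs = layerH As W Xs) (hHt : Ht = layerH At W Xt)
    (hs : ∀ l ≤ L, ∀ i, rowNorm (Hs l) i ≠ 0)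
    (ht : ∀ l ≤ L, ∀ j, rowNorm (Ht l) j ≠ 0)
    (Z : ℕ → Matrix (Fin n) (Fin m) ℝ)
    (hZ : ∀ l i j, Z l i j = 1 / (rowNorm (Hs l) i * rowNorm (Ht l) j))
    (Q : Matrix (Fin n) (Fin m) ℝ)
    (hQ : Q = fun i j => Z 0 i j * (Xs * Xtᵀ) i j)
    (P : Fin n → Fin m → Matrix (Fin n) (Fin m) ℝ)
    (hP : ∀ i j, P i j = ∑ l ∈ Finset.Icc 1 L, Z l i j • (Hs (l - 1) * W l * (W l)ᵀ * (Ht (l - 1))ᵀ))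
    (S : Matrix (Fin n) (Fin m) ℝ) :
    ∑ i, ∑ j, S i j * ∑ l ∈ Finset.range (L + 1), cosSim (Hs l) (Ht l) i j =
      (∑ i, ∑ j, Q i j * S i j) +
        ∑ i, ∑ j, S i j * ∑ i', ∑ j', As i i' * At j j' * P i j i' j' :=
  stmt2_general L As Xs At Xt W Hs Ht hHs hHt Z hZ Q hQ P hP S
end

section
/- Permutation invariance of the weight-free GNN similarity: if P and R are permutation matrices and the target graph is an isomorphic copy of the source, i.e., A^{(t)} = P A^{(s)} P^T and X^{(t)} = P X^{(s)}, then the weight-free BasicTFGM similarity matrix M = (A^{(s)})^L X^{(s)} ((A^{(t)})^L X^{(t)})^T satisfies M = (A^{(s)})^L X^{(s)} (X^{(s)})^T ((A^{(s)})^L)^T P^T; in particular, the assignment S = P^T achieves objective value ∑_i ‖((A^{(s)})^L X^{(s)})_i‖₂². -/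
/-!
Conjugation by an orthogonal matrix commutes with powers, so the embedding of the permuted graph
`(P A Pᵀ, P X)` is `P` times the embedding `E = Aᴸ X` of the original one, and `M = E Eᵀ Pᵀ`.
The objective of `S` against `M` is `trace (M Sᵀ)`; for `S = Pᵀ` this is `trace (E Eᵀ)`, the sum
of the squared row norms of `E`.
-/

open Matrix Finset

namespace Matrix

variable {n m R : Type*} [Fintype n]

section Trace

variable [CommSemiring R]

lemma sum_apply_mul_apply_eq_trace (S M : Matrix n n R) :
    ∑ i, ∑ j, S i j * M i j = trace (M * Sᵀ) := by
  simp only [trace, diag, mul_apply, transpose_apply, mul_comm]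

lemma trace_mul_transpose_self [Fintype m] (E : Matrix n m R) :
    trace (E * Eᵀ) = ∑ i, ∑ k, E i k ^ 2 := by
  simp only [trace, diag, mul_apply, transpose_apply, sq]

end Trace

variable [DecidableEq n]

lemma transpose_permMatrix_mul_self [NonAssocSemiring R] (σ : Equiv.Perm n) :
    (σ.permMatrix R)ᵀ * σ.permMatrix R = 1 := by
  rw [transpose_permMatrix, ← permMatrix_mul, mul_inv_cancel, permMatrix_one]

section Conj

variable [CommRing R] {P : Matrix n n R}

lemma conj_pow_of_transpose_mul_self (hP : Pᵀ * P = 1) (A : Matrix n n R) (L : ℕ) :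
    (P * A * Pᵀ) ^ L = P * A ^ L * Pᵀ :=
  Units.conj_pow ⟨P, Pᵀ, mul_eq_one_comm.mp hP, hP⟩ A L

lemma conj_pow_mul_of_transpose_mul_self (hP : Pᵀ * P = 1) (A : Matrix n n R)
    (X : Matrix n m R) (L : ℕ) :
    (P * A * Pᵀ) ^ L * (P * X) = P * (A ^ L * X) := by
  rw [conj_pow_of_transpose_mul_self hP, Matrix.mul_assoc, Matrix.mul_assoc,
    ← Matrix.mul_assoc Pᵀ, hP, Matrix.one_mul]

end Conj

end Matrix

theorem stmt10 {n d : ℕ} (L : ℕ)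
    (As : Matrix (Fin n) (Fin n) ℝ) (Xs : Matrix (Fin n) (Fin d) ℝ)
    (At : Matrix (Fin n) (Fin n) ℝ) (Xt : Matrix (Fin n) (Fin d) ℝ)
    (σ : Equiv.Perm (Fin n)) (P : Matrix (Fin n) (Fin n) ℝ)
    (hP : ∀ i j, P i j = if σ i = j then 1 else 0)
    (hAt : At = P * As * Pᵀ) (hXt : Xt = P * Xs)
    (M : Matrix (Fin n) (Fin n) ℝ)
    (hM : M = (As ^ L * Xs) * (At ^ L * Xt)ᵀ) :
    M = As ^ L * Xs * Xsᵀ * (As ^ L)ᵀ * Pᵀ ∧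
      ∑ i, ∑ j, Pᵀ i j * M i j = ∑ i, ∑ k, ((As ^ L * Xs) i k) ^ 2 := by
  have hPP : Pᵀ * P = 1 := by
    obtain rfl : P = σ.permMatrix ℝ := by
      ext i j
      simp [hP]
    exact transpose_permMatrix_mul_self σ
  have hM' : M = As ^ L * Xs * (As ^ L * Xs)ᵀ * Pᵀ := by
    rw [hM, hAt, hXt, conj_pow_mul_of_transpose_mul_self hPP, transpose_mul]
    simp only [Matrix.mul_assoc]
  refine ⟨by simp only [hM', transpose_mul, Matrix.mul_assoc], ?_⟩
  rw [sum_apply_mul_apply_eq_trace, transpose_transpose, hM', Matrix.mul_assoc _ Pᵀ, hPP,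
    Matrix.mul_one, trace_mul_transpose_self]
end

section
/- If two graphs are isomorphic via permutation P (A^{(t)} = P A^{(s)} P^T, X^{(t)} = P X^{(s)}), then the assignment S = P^T maximizes the BasicTFGM objective with the weight-free GNN φ(A,X) = A^L X over all permutation-matrix assignments, i.e., for every permutation matrix S, ∑_{ij} S_{ij} (φ(G^{(s)}) φ(G^{(t)})^T)_{ij} ≤ ∑_{ij} (P^T)_{ij} (φ(G^{(s)}) φ(G^{(t)})^T)_{ij}. -/
/-!
The transport `P` intertwines the two graphs, `P * A⁽ˢ⁾ = A⁽ᵗ⁾ * P`, hence also their `L`-th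
powers, so `φ(G⁽ᵗ⁾) = P * B` with `B = φ(G⁽ˢ⁾)`. The objective of an assignment `τ` then becomes
`∑ᵢ ⟨Bᵢ, B_{σ(τ i)}⟩`, and summing `2 ⟨u, v⟩ ≤ ‖u‖² + ‖v‖²` over the rows shows that the identity
pairing `σ ∘ τ = id`, i.e. `S = Pᵀ`, is optimal.
-/

open Matrix Finset

lemma semiconjBy_of_eq_mul_mul {M : Type*} [Monoid M] {a b p q : M} (hqp : q * p = 1)
    (hb : b = p * a * q) : SemiconjBy p a b := by
  rw [SemiconjBy, hb, mul_assoc, hqp, mul_one]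

-- The gap between the two sides is `(1/2) ∑ᵢ ‖Bᵢ - B_{ρ i}‖²`.
lemma Matrix.sum_mul_transpose_apply_perm_le {ι κ R : Type*} [Fintype ι] [Fintype κ] [CommRing R]
    [LinearOrder R] [IsStrictOrderedRing R] (B : Matrix ι κ R) (ρ : Equiv.Perm ι) :
    ∑ i, (B * Bᵀ) i (ρ i) ≤ ∑ i, (B * Bᵀ) i i := by
  set g : ι → ι → R := fun i j => (B * Bᵀ) i j
  have hg : ∀ i j, g i j = ∑ k, B i k * B j k := fun i j => rfl
  have hρ : ∑ i, g (ρ i) (ρ i) = ∑ i, g i i := Equiv.sum_comp ρ fun i => g i i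
  have hsq : 0 ≤ ∑ i, (g i i - 2 * g i (ρ i) + g (ρ i) (ρ i)) := by
    refine sum_nonneg fun i _ => ?_
    have hrow : g i i - 2 * g i (ρ i) + g (ρ i) (ρ i) = ∑ k, (B i k - B (ρ i) k) ^ 2 := by
      simp only [hg, mul_sum, ← sum_sub_distrib, ← sum_add_distrib]
      exact sum_congr rfl fun k _ => by ring
    rw [hrow]
    positivity
  rw [sum_add_distrib, sum_sub_distrib, hρ, ← mul_sum] at hsq
  linarith

section PermMatrix

variable {ι R : Type*} [DecidableEq ι]

lemma Equiv.Perm.permMatrix_eq_of_apply [Zero R] [One R] {σ : Equiv.Perm ι} {P : Matrix ι ι R}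
    (hP : ∀ i j, P i j = if σ i = j then 1 else 0) : P = σ.permMatrix R := by
  ext i j
  simp [hP, PEquiv.toMatrix_apply]

variable [Fintype ι]

lemma Matrix.sum_sum_permMatrix_mul_apply [NonAssocSemiring R] (τ : Equiv.Perm ι)
    (M : Matrix ι ι R) : ∑ i, ∑ j, τ.permMatrix R i j * M i j = ∑ i, M i (τ i) := by
  simp

lemma Matrix.permMatrix_inv_mul_self [NonAssocSemiring R] (σ : Equiv.Perm ι) :
    σ⁻¹.permMatrix R * σ.permMatrix R = 1 := by
  rw [← permMatrix_mul, mul_inv_cancel, permMatrix_one]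

end PermMatrix

theorem stmt11 {n d : ℕ} (L : ℕ)
    (As : Matrix (Fin n) (Fin n) ℝ) (Xs : Matrix (Fin n) (Fin d) ℝ)
    (At : Matrix (Fin n) (Fin n) ℝ) (Xt : Matrix (Fin n) (Fin d) ℝ)
    (σ : Equiv.Perm (Fin n)) (P : Matrix (Fin n) (Fin n) ℝ)
    (hP : ∀ i j, P i j = if σ i = j then 1 else 0)
    (hAt : At = P * As * Pᵀ) (hXt : Xt = P * Xs) :
    ∀ (τ : Equiv.Perm (Fin n)) (S : Matrix (Fin n) (Fin n) ℝ),
      (∀ i j, S i j = if τ i = j then 1 else 0) →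
      ∑ i, ∑ j, S i j * ((As ^ L * Xs) * (At ^ L * Xt)ᵀ) i j ≤
        ∑ i, ∑ j, Pᵀ i j * ((As ^ L * Xs) * (At ^ L * Xt)ᵀ) i j := by
  intro τ S hS
  obtain rfl := Equiv.Perm.permMatrix_eq_of_apply hP
  obtain rfl := Equiv.Perm.permMatrix_eq_of_apply hS
  rw [transpose_permMatrix] at hAt ⊢
  set B := As ^ L * Xs
  have hφt : At ^ L * Xt = B.submatrix σ id := by
    rw [hXt, ← Matrix.mul_assoc,
      ← ((semiconjBy_of_eq_mul_mul (permMatrix_inv_mul_self σ) hAt).pow_right L).eq,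
      Matrix.mul_assoc, PEquiv.toMatrix_toPEquiv_mul]
  have hobj : ∀ i j, (B * (At ^ L * Xt)ᵀ) i j = (B * Bᵀ) i (σ j) := by
    simp [hφt, mul_apply]
  rw [sum_sum_permMatrix_mul_apply, sum_sum_permMatrix_mul_apply]
  simp only [hobj, Equiv.Perm.inv_def, Equiv.apply_symm_apply]
  exact sum_mul_transpose_apply_perm_le B (τ.trans σ)
end
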